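/- Let K ⊂ ℂ be compact, let Q : K → ℝ be lower semicontinuous (write w = e^{-Q}), and let ν be a finite Borel measure on K such that (K, ν, Q) satisfies the weighted Bernstein–Markov property. For k ≥ 1 set Z_k := ∫_{K^{k+1}} |VDM_k(z_0,…,z_k)|² e^{-2kQ(z_0)}⋯e^{-2kQ(z_k)} dν(z_0)⋯dν(z_k), where VDM_k(z_0,…,z_k) = ∏_{0 ≤ i < j ≤ k}(z_j − z_i), and set δ_k^Q(K) := (max_{z_0,…,z_k ∈ K} |VDM_k(z_0,…,z_k)| e^{-kQ(z_0)}⋯e^{-kQ(z_k)})^{2/(k(k+1))}. If δ_k^Q(K) → L as k → ∞ for some L ≥ 0, then Z_k^{1/k²} → L as k → ∞. -/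

import Mathlib

/-!
Let `S_k` be the supremum over `K^{k+1}` of the weighted Vandermonde
`|VDM_k(z)| e^{-kQ(z_0)}⋯e^{-kQ(z_k)}`, so that `δ_k^Q(K)^{(k+1)/k} = (S_k²)^{1/k²}`.
Bounding the integrand of `Z_k` by `S_k²` gives `Z_k ≤ S_k² ν(K)^{k+1}`. Conversely, `VDM_k` is a
polynomial of degree at most `k` in each variable, so the squared Bernstein–Markov inequality,
applied to the variables `z_0, …, z_k` one at a time, gives `S_k² ≤ (C (1+ε)^k)^{2(k+1)} Z_k`.
After taking `k²`-th roots the two bounds tend to `L` and `L / (1+ε)²`. A lower semicontinuous `Q`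
is bounded below on `K` and agrees on `K` with a measurable function, which changes neither
`Z_k`, `δ_k^Q(K)` nor the Bernstein–Markov property.
-/
open MeasureTheory Filter

/-- `(K, ν, Q)` satisfies the weighted Bernstein–Markov property (with `w = e^{-Q}`). -/
def WeightedBernsteinMarkov (K : Set ℂ) (ν : Measure ℂ) (Q : ℂ → ℝ) : Prop :=
  ∀ ε : ℝ, 0 < ε → ∃ C : ℝ, 0 < C ∧ ∀ k : ℕ, 1 ≤ k → ∀ p : Polynomial ℂ,
    p.natDegree ≤ k → ∀ z ∈ K,
      ‖p.eval z‖ * Real.exp (-Q z) ^ k ≤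
        C * (1 + ε) ^ k *
          Real.sqrt (∫ w in K, ‖p.eval w‖ ^ 2 * Real.exp (-Q w) ^ (2 * k) ∂ν)

/-- The classical Vandermonde determinant `VDM_k(z_0,…,z_k) = ∏_{i<j} (z_j - z_i)`. -/
noncomputable def VDM (k : ℕ) (z : Fin (k + 1) → ℂ) : ℂ :=
  ∏ i : Fin (k + 1), ∏ j ∈ Finset.Ioi i, (z j - z i)

/-- `Z_k = ∫_{K^{k+1}} |VDM_k(z_0,…,z_k)|² e^{-2kQ(z_0)}⋯e^{-2kQ(z_k)} dν(z_0)⋯dν(z_k)`. -/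
noncomputable def ZkQ (K : Set ℂ) (ν : Measure ℂ) (Q : ℂ → ℝ) (k : ℕ) : ℝ :=
  ∫ z in {z : Fin (k + 1) → ℂ | ∀ i, z i ∈ K},
    ‖VDM k z‖ ^ 2 * ∏ i : Fin (k + 1), Real.exp (-(2 * (k : ℝ)) * Q (z i))
    ∂(Measure.pi fun _ : Fin (k + 1) => ν)

/-- The weighted `k`-th order diameter
`δ_k^Q(K) = (max_{z_0,…,z_k ∈ K} |VDM_k(z_0,…,z_k)| e^{-kQ(z_0)}⋯e^{-kQ(z_k)})^{2/(k(k+1))}`. -/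
noncomputable def deltakQ (K : Set ℂ) (Q : ℂ → ℝ) (k : ℕ) : ℝ :=
  (sSup ((fun z : Fin (k + 1) → ℂ =>
      ‖VDM k z‖ * ∏ i : Fin (k + 1), Real.exp (-(k : ℝ) * Q (z i))) ''
    {z : Fin (k + 1) → ℂ | ∀ i, z i ∈ K})) ^ ((2 : ℝ) / ((k : ℝ) * ((k : ℝ) + 1)))

open Polynomial Set Function Topology

theorem Matrix.exists_polynomial_eval_eq_det_updateRow {R : Type*} [CommRing R] {n : ℕ}
    (A : Matrix (Fin (n + 1)) (Fin (n + 1)) R) (j : Fin (n + 1)) :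
    ∃ p : R[X], p.natDegree ≤ n ∧
      ∀ x, p.eval x = (A.updateRow j fun l => x ^ (l : ℕ)).det := by
  refine ⟨∑ l : Fin (n + 1),
      C ((-1) ^ (j + l : ℕ) * (A.submatrix j.succAbove l.succAbove).det) * X ^ (l : ℕ),
    natDegree_sum_le_of_forall_le _ _ fun l _ =>
      (natDegree_C_mul_X_pow_le _ _).trans (Nat.lt_succ_iff.1 l.2), fun x => ?_⟩
  rw [Matrix.det_succ_row _ j, eval_finsetSum]
  refine Finset.sum_congr rfl fun l _ => ?_
  simp only [eval_mul, eval_C, eval_pow, eval_X, Matrix.updateRow_self,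
    Matrix.submatrix_updateRow_succAbove]
  ring

theorem exists_polynomial_eval_eq_VDM_update (k : ℕ) (z : Fin (k + 1) → ℂ) (j : Fin (k + 1)) :
    ∃ p : ℂ[X], p.natDegree ≤ k ∧ ∀ x, p.eval x = VDM k (update z j x) := by
  obtain ⟨p, hdeg, hp⟩ := (Matrix.vandermonde z).exists_polynomial_eval_eq_det_updateRow j
  refine ⟨p, hdeg, fun x => ?_⟩
  rw [hp, VDM, ← Matrix.det_vandermonde]
  congr 1
  ext i l
  rcases eq_or_ne i j with rfl | hi
  · simp
  · simp [hi]

theorem continuous_VDM (k : ℕ) : Continuous (VDM k) := by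
  unfold VDM
  fun_prop

noncomputable def weightedVDM (Q : ℂ → ℝ) (k : ℕ) (z : Fin (k + 1) → ℂ) : ℝ :=
  ‖VDM k z‖ * ∏ i : Fin (k + 1), Real.exp (-(k : ℝ) * Q (z i))

section weightedVDM

variable {Q : ℂ → ℝ} {k : ℕ}

theorem weightedVDM_nonneg (z : Fin (k + 1) → ℂ) : 0 ≤ weightedVDM Q k z := by
  unfold weightedVDM
  positivity

theorem measurable_weightedVDM (hQ : Measurable Q) : Measurable (weightedVDM Q k) := by
  unfold weightedVDM
  have := (continuous_VDM k).measurable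
  fun_prop

theorem sq_weightedVDM (z : Fin (k + 1) → ℂ) :
    weightedVDM Q k z ^ 2 =
      ‖VDM k z‖ ^ 2 * ∏ i : Fin (k + 1), Real.exp (-(2 * (k : ℝ)) * Q (z i)) := by
  rw [weightedVDM, mul_pow, ← Finset.prod_pow]
  congr 1
  refine Finset.prod_congr rfl fun i _ => ?_
  rw [← Real.exp_nat_mul]
  ring_nf

theorem weightedVDM_update (z : Fin (k + 1) → ℂ) (j : Fin (k + 1)) (x : ℂ) :
    weightedVDM Q k (update z j x) =
      ‖VDM k (update z j x)‖ * Real.exp (-(k : ℝ) * Q x) *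
        ∏ i ∈ Finset.univ \ {j}, Real.exp (-(k : ℝ) * Q (z i)) := by
  rw [weightedVDM, mul_assoc]
  congr 1
  rw [← Finset.prod_update_of_mem (Finset.mem_univ j)]
  exact Finset.prod_congr rfl fun i _ => by rw [apply_update (fun _ y => Real.exp (-(k : ℝ) * Q y))]

theorem weightedVDM_congr {K : Set ℂ} {Q' : ℂ → ℝ} (h : EqOn Q Q' K) {z : Fin (k + 1) → ℂ}
    (hz : ∀ i, z i ∈ K) : weightedVDM Q k z = weightedVDM Q' k z := by
  simp only [weightedVDM, h (hz _)]

theorem bddAbove_weightedVDM_image {K : Set ℂ} (hK : IsCompact K) (hQ : BddBelow (Q '' K)) :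
    BddAbove (weightedVDM Q k '' {z | ∀ i, z i ∈ K}) := by
  obtain ⟨m, hm⟩ := hQ
  have hKpi : IsCompact {z : Fin (k + 1) → ℂ | ∀ i, z i ∈ K} := by
    simpa only [Set.pi, mem_univ, true_imp_iff] using isCompact_univ_pi fun _ => hK
  obtain ⟨B, hB⟩ := hKpi.exists_bound_of_continuousOn (continuous_VDM k).continuousOn
  refine ⟨B * Real.exp (-(k : ℝ) * m) ^ (k + 1), ?_⟩
  rintro _ ⟨z, hz, rfl⟩
  refine mul_le_mul (by simpa using hB z hz) ?_ (by positivity) ((norm_nonneg _).trans (hB z hz))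
  calc ∏ i, Real.exp (-(k : ℝ) * Q (z i)) ≤ ∏ _i : Fin (k + 1), Real.exp (-(k : ℝ) * m) := by
        refine Finset.prod_le_prod (fun _ _ => by positivity) fun i _ => Real.exp_le_exp.2 ?_
        exact mul_le_mul_of_nonpos_left (hm ⟨z i, hz i, rfl⟩) (by simp)
    _ = Real.exp (-(k : ℝ) * m) ^ (k + 1) := by
        rw [Finset.prod_const, Finset.card_univ, Fintype.card_fin]

end weightedVDM

def BernsteinMarkovAt (K : Set ℂ) (ν : Measure ℂ) (Q : ℂ → ℝ) (k : ℕ) (D : ℝ) : Prop :=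
  ∀ p : ℂ[X], p.natDegree ≤ k → ∀ z ∈ K,
    ‖p.eval z‖ * Real.exp (-Q z) ^ k ≤
      D * Real.sqrt (∫ w in K, ‖p.eval w‖ ^ 2 * Real.exp (-Q w) ^ (2 * k) ∂ν)

section BernsteinMarkov

variable {K : Set ℂ} {ν : Measure ℂ} {Q : ℂ → ℝ} {k : ℕ} {D : ℝ}

theorem BernsteinMarkovAt.ofReal_sq_le_lintegral (h : BernsteinMarkovAt K ν Q k D) {p : ℂ[X]}
    (hp : p.natDegree ≤ k) {x : ℂ} (hx : x ∈ K) :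
    ENNReal.ofReal ((‖p.eval x‖ * Real.exp (-(k : ℝ) * Q x)) ^ 2) ≤
      ENNReal.ofReal (D ^ 2) *
        ∫⁻ w in K, ENNReal.ofReal ((‖p.eval w‖ * Real.exp (-(k : ℝ) * Q w)) ^ 2) ∂ν := by
  have hexp : ∀ (n : ℕ) (y : ℂ), Real.exp (-Q y) ^ n = Real.exp (-(n : ℝ) * Q y) := fun n y => by
    rw [← Real.exp_nat_mul]
    ring_nf
  set f : ℂ → ℝ := fun w => (‖p.eval w‖ * Real.exp (-(k : ℝ) * Q w)) ^ 2
  have hI : ∫ w in K, ‖p.eval w‖ ^ 2 * Real.exp (-Q w) ^ (2 * k) ∂ν = ∫ w in K, f w ∂ν := by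
    congr 1 with w
    simp only [f]
    rw [mul_pow, ← hexp, ← pow_mul, mul_comm k]
  have hpx := h p hp x hx
  rw [hI, hexp] at hpx
  have hsq : f x ≤ D ^ 2 * ∫ w in K, f w ∂ν := by
    calc f x ≤ (D * Real.sqrt (∫ w in K, f w ∂ν)) ^ 2 := pow_le_pow_left₀ (by positivity) hpx 2
      _ = D ^ 2 * ∫ w in K, f w ∂ν := by
        rw [mul_pow, Real.sq_sqrt (integral_nonneg fun w => sq_nonneg _)]
  calc ENNReal.ofReal (f x) ≤ ENNReal.ofReal (D ^ 2) * ENNReal.ofReal (∫ w in K, f w ∂ν) := by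
        rw [← ENNReal.ofReal_mul (sq_nonneg D)]
        exact ENNReal.ofReal_le_ofReal hsq
    _ ≤ ENNReal.ofReal (D ^ 2) * ∫⁻ w in K, ENNReal.ofReal (f w) ∂ν := by
        gcongr
        rw [← Real.enorm_of_nonneg (integral_nonneg fun w => sq_nonneg _)]
        refine (enorm_integral_le_lintegral_enorm _).trans_eq ?_
        simp only [f, Real.enorm_of_nonneg (sq_nonneg _)]

theorem BernsteinMarkovAt.ofReal_sq_weightedVDM_le_lintegral_update
    (h : BernsteinMarkovAt K ν Q k D) {z : Fin (k + 1) → ℂ} {j : Fin (k + 1)} (hz : z j ∈ K) :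
    ENNReal.ofReal (weightedVDM Q k z ^ 2) ≤
      ENNReal.ofReal (D ^ 2) *
        ∫⁻ x in K, ENNReal.ofReal (weightedVDM Q k (update z j x) ^ 2) ∂ν := by
  obtain ⟨p, hdeg, hp⟩ := exists_polynomial_eval_eq_VDM_update k z j
  set R := ∏ i ∈ Finset.univ \ {j}, Real.exp (-(k : ℝ) * Q (z i))
  have hsplit : ∀ x, ENNReal.ofReal (weightedVDM Q k (update z j x) ^ 2) =
      ENNReal.ofReal ((‖p.eval x‖ * Real.exp (-(k : ℝ) * Q x)) ^ 2) * ENNReal.ofReal (R ^ 2) := by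
    intro x
    rw [weightedVDM_update, hp, mul_pow, ENNReal.ofReal_mul (sq_nonneg _)]
  calc ENNReal.ofReal (weightedVDM Q k z ^ 2)
      = ENNReal.ofReal ((‖p.eval (z j)‖ * Real.exp (-(k : ℝ) * Q (z j))) ^ 2) *
          ENNReal.ofReal (R ^ 2) := by rw [← hsplit, update_eq_self]
    _ ≤ ENNReal.ofReal (D ^ 2) *
          (∫⁻ x in K, ENNReal.ofReal ((‖p.eval x‖ * Real.exp (-(k : ℝ) * Q x)) ^ 2) ∂ν) *
          ENNReal.ofReal (R ^ 2) := by gcongr; exact h.ofReal_sq_le_lintegral hdeg hz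
    _ = ENNReal.ofReal (D ^ 2) *
          ∫⁻ x in K, ENNReal.ofReal (weightedVDM Q k (update z j x) ^ 2) ∂ν := by
        simp_rw [mul_assoc, hsplit, lintegral_mul_const' _ _ ENNReal.ofReal_ne_top]

theorem BernsteinMarkovAt.ofReal_sq_weightedVDM_le_lmarginal [SigmaFinite ν]
    (h : BernsteinMarkovAt K ν Q k D) (hK : MeasurableSet K) (hQ : Measurable Q)
    (s : Finset (Fin (k + 1))) {z : Fin (k + 1) → ℂ} (hz : ∀ i, z i ∈ K) :
    ENNReal.ofReal (weightedVDM Q k z ^ 2) ≤ ENNReal.ofReal (D ^ 2) ^ s.card *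
      (∫⋯∫⁻_s, fun y => ENNReal.ofReal (weightedVDM Q k y ^ 2) ∂fun _ => ν.restrict K) z := by
  have hG : Measurable fun y => ENNReal.ofReal (weightedVDM Q k y ^ 2) :=
    ((measurable_weightedVDM hQ).pow_const 2).ennreal_ofReal
  induction s using Finset.induction_on generalizing z with
  | empty => simp
  | insert j s hj ih =>
    have hupdate : ∀ x ∈ K, ∀ i, update z j x i ∈ K := fun x hx i => by
      rcases eq_or_ne i j with rfl | hi
      · simpa
      · simpa [hi] using hz i
    calc ENNReal.ofReal (weightedVDM Q k z ^ 2)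
        ≤ ENNReal.ofReal (D ^ 2) *
            ∫⁻ x in K, ENNReal.ofReal (weightedVDM Q k (update z j x) ^ 2) ∂ν :=
          h.ofReal_sq_weightedVDM_le_lintegral_update (hz j)
      _ ≤ ENNReal.ofReal (D ^ 2) * ∫⁻ x in K, ENNReal.ofReal (D ^ 2) ^ s.card *
            (∫⋯∫⁻_s, fun y => ENNReal.ofReal (weightedVDM Q k y ^ 2) ∂fun _ => ν.restrict K)
              (update z j x) ∂ν := by
          exact mul_le_mul' le_rfl (setLIntegral_mono' hK fun x hx => ih (hupdate x hx))
      _ = _ := by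
          rw [lmarginal_insert _ hG hj, Finset.card_insert_of_notMem hj,
            lintegral_const_mul' _ _ (ENNReal.pow_ne_top ENNReal.ofReal_ne_top), pow_succ]
          ring

end BernsteinMarkov

section ZkQ

variable {K : Set ℂ} {ν : Measure ℂ} {Q : ℂ → ℝ} {k : ℕ}

theorem ZkQ_eq_integral [SigmaFinite ν] :
    ZkQ K ν Q k = ∫ z, weightedVDM Q k z ^ 2 ∂Measure.pi fun _ : Fin (k + 1) => ν.restrict K := by
  have hpi : {z : Fin (k + 1) → ℂ | ∀ i, z i ∈ K} = univ.pi fun _ => K := by ext; simp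
  rw [ZkQ, hpi, Measure.restrict_pi_pi]
  simp only [sq_weightedVDM]

theorem ZkQ_nonneg : 0 ≤ ZkQ K ν Q k :=
  integral_nonneg fun _ => by positivity

theorem ae_forall_mem_pi_restrict {ι α : Type*} [Fintype ι] [MeasurableSpace α] {μ : Measure α}
    [SigmaFinite μ] {s : Set α} (hs : MeasurableSet s) :
    ∀ᵐ z ∂Measure.pi fun _ : ι => μ.restrict s, ∀ i, z i ∈ s :=
  ae_all_iff.2 fun _ => Measure.tendsto_eval_ae_ae.eventually (ae_restrict_mem hs)

theorem ae_norm_sq_weightedVDM_le [SigmaFinite ν] (hK : MeasurableSet K)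
    (hbdd : BddAbove (weightedVDM Q k '' {z | ∀ i, z i ∈ K})) :
    ∀ᵐ z ∂Measure.pi fun _ : Fin (k + 1) => ν.restrict K,
      ‖weightedVDM Q k z ^ 2‖ ≤ sSup (weightedVDM Q k '' {z | ∀ i, z i ∈ K}) ^ 2 := by
  filter_upwards [ae_forall_mem_pi_restrict hK] with z hz
  rw [Real.norm_of_nonneg (sq_nonneg _)]
  exact pow_le_pow_left₀ (weightedVDM_nonneg z) (le_csSup hbdd ⟨z, hz, rfl⟩) 2

theorem ZkQ_le [IsFiniteMeasure ν] (hK : MeasurableSet K)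
    (hbdd : BddAbove (weightedVDM Q k '' {z | ∀ i, z i ∈ K})) :
    ZkQ K ν Q k ≤ sSup (weightedVDM Q k '' {z | ∀ i, z i ∈ K}) ^ 2 * ν.real K ^ (k + 1) := by
  rw [ZkQ_eq_integral]
  refine (Real.le_norm_self _).trans ((norm_integral_le_of_norm_le_const
    (ae_norm_sq_weightedVDM_le hK hbdd)).trans_eq ?_)
  simp [Measure.real, Measure.pi_univ]

theorem sq_sSup_weightedVDM_le_ZkQ [IsFiniteMeasure ν] {D : ℝ} (hK : MeasurableSet K)
    (hQ : Measurable Q) (hbdd : BddAbove (weightedVDM Q k '' {z | ∀ i, z i ∈ K}))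
    (h : BernsteinMarkovAt K ν Q k D) :
    sSup (weightedVDM Q k '' {z | ∀ i, z i ∈ K}) ^ 2 ≤ (D ^ 2) ^ (k + 1) * ZkQ K ν Q k := by
  have hint : Integrable (fun z => weightedVDM Q k z ^ 2)
      (Measure.pi fun _ : Fin (k + 1) => ν.restrict K) :=
    Integrable.of_bound ((measurable_weightedVDM hQ).pow_const 2).aestronglyMeasurable _
      (ae_norm_sq_weightedVDM_le hK hbdd)
  have hZ : ENNReal.ofReal (ZkQ K ν Q k) =
      ∫⁻ z, ENNReal.ofReal (weightedVDM Q k z ^ 2) ∂Measure.pi fun _ => ν.restrict K := by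
    rw [ZkQ_eq_integral, ofReal_integral_eq_lintegral_ofReal hint
      (ae_of_all _ fun _ => sq_nonneg _)]
  have hRHS : 0 ≤ (D ^ 2) ^ (k + 1) * ZkQ K ν Q k := mul_nonneg (by positivity) ZkQ_nonneg
  have hle : ∀ z ∈ {z : Fin (k + 1) → ℂ | ∀ i, z i ∈ K},
      weightedVDM Q k z ≤ Real.sqrt ((D ^ 2) ^ (k + 1) * ZkQ K ν Q k) := by
    intro z hz
    have hmarg := h.ofReal_sq_weightedVDM_le_lmarginal hK hQ Finset.univ hz
    rw [lmarginal_univ, Finset.card_univ, Fintype.card_fin, ← hZ, ← ENNReal.ofReal_pow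
      (sq_nonneg D), ← ENNReal.ofReal_mul (by positivity), ENNReal.ofReal_le_ofReal_iff hRHS]
      at hmarg
    exact (le_abs_self _).trans (Real.abs_le_sqrt hmarg)
  calc sSup (weightedVDM Q k '' {z | ∀ i, z i ∈ K}) ^ 2
      ≤ Real.sqrt ((D ^ 2) ^ (k + 1) * ZkQ K ν Q k) ^ 2 :=
        pow_le_pow_left₀ (Real.sSup_nonneg (by rintro _ ⟨z, -, rfl⟩; exact weightedVDM_nonneg z))
          (Real.sSup_le (by rintro _ ⟨z, hz, rfl⟩; exact hle z hz) (Real.sqrt_nonneg _)) 2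
    _ = (D ^ 2) ^ (k + 1) * ZkQ K ν Q k := Real.sq_sqrt hRHS

theorem ZkQ_congr {Q' : ℂ → ℝ} (hK : MeasurableSet K) [SigmaFinite ν] (h : EqOn Q Q' K) :
    ZkQ K ν Q k = ZkQ K ν Q' k := by
  simp only [ZkQ_eq_integral]
  refine integral_congr_ae ?_
  filter_upwards [ae_forall_mem_pi_restrict hK] with z hz
  rw [weightedVDM_congr h hz]

theorem deltakQ_congr {Q' : ℂ → ℝ} (h : EqOn Q Q' K) : deltakQ K Q k = deltakQ K Q' k := by
  change sSup (weightedVDM Q k '' _) ^ _ = sSup (weightedVDM Q' k '' _) ^ _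
  congr 2
  exact image_congr fun z hz => weightedVDM_congr h hz

theorem WeightedBernsteinMarkov.congr {Q' : ℂ → ℝ} (hK : MeasurableSet K) (h : EqOn Q Q' K)
    (hBM : WeightedBernsteinMarkov K ν Q) : WeightedBernsteinMarkov K ν Q' := by
  intro ε hε
  obtain ⟨C, hC, hCBM⟩ := hBM ε hε
  refine ⟨C, hC, fun k hk p hp z hz => ?_⟩
  rw [← h hz, setIntegral_congr_fun hK fun w hw => by rw [← h hw]]
  exact hCBM k hk p hp z hz

end ZkQ

theorem LowerSemicontinuousOn.exists_measurable_eqOn {α : Type*} [TopologicalSpace α]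
    [MeasurableSpace α] [OpensMeasurableSpace α] {f : α → ℝ} {s : Set α} (hs : MeasurableSet s)
    (hf : LowerSemicontinuousOn f s) : ∃ g : α → ℝ, Measurable g ∧ EqOn f g s := by
  classical
  refine ⟨s.piecewise f 0, measurable_of_restrict_of_restrict_compl hs ?_ ?_,
    fun x hx => (piecewise_eq_of_mem s f 0 hx).symm⟩
  · rw [domRestrict_piecewise]
    exact (lowerSemicontinuous_restrict_iff.2 hf).measurable
  · rw [domRestrict_piecewise_compl]
    exact measurable_const

theorem rpow_two_div_mul_add_one_rpow {x t : ℝ} (hx : 0 ≤ x) (ht : 0 < t) :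
    (x ^ (2 / (t * (t + 1)))) ^ ((t + 1) / t) = (x ^ 2) ^ (1 / t ^ 2) := by
  rw [← Real.rpow_mul hx, ← Real.rpow_natCast, ← Real.rpow_mul hx]
  congr 1
  field_simp
  ring

theorem tendsto_pow_mul_pow_rpow_one_div_sq {a b : ℝ} (ha : 0 < a) (hb : 0 < b) :
    Tendsto (fun k : ℕ => (a ^ (k + 1) * b ^ (k * (k + 1))) ^ (1 / (k : ℝ) ^ 2)) atTop (𝓝 b) := by
  -- with `x = 1 / k` the expression is `a ^ (x + x ^ 2) * b ^ (1 + x)`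
  have hcont : ContinuousAt (fun x : ℝ => a ^ (x + x ^ 2) * b ^ (1 + x)) 0 := by
    fun_prop (disch := positivity)
  have hlim := hcont.tendsto.comp tendsto_one_div_atTop_nhds_zero_nat
  simp only [ne_eq, OfNat.ofNat_ne_zero, not_false_eq_true, zero_pow, add_zero,
    Real.rpow_zero, Real.rpow_one, one_mul] at hlim
  refine hlim.congr' ((eventually_ne_atTop 0).mono fun k hk => ?_)
  have hk' : (k : ℝ) ≠ 0 := Nat.cast_ne_zero.2 hk
  simp only [Function.comp_apply]
  symm
  rw [Real.mul_rpow (by positivity) (by positivity), ← Real.rpow_natCast a,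
    ← Real.rpow_natCast b, ← Real.rpow_mul ha.le, ← Real.rpow_mul hb.le]
  congr 2 <;> push_cast <;> field_simp

theorem tendsto_of_tendsto_of_le_of_eventually_lower {α ι β : Type*} [LinearOrder β]
    [TopologicalSpace β] [OrderTopology β] {l : Filter α} {F : Filter ι} [F.NeBot]
    {u upper : α → β} {c : ι → β} {L : β}
    (hupper : Tendsto upper l (𝓝 L)) (hu : ∀ᶠ k in l, u k ≤ upper k) (hc : Tendsto c F (𝓝 L))
    (hlower : ∀ᶠ i in F, ∃ v : α → β, Tendsto v l (𝓝 (c i)) ∧ ∀ᶠ k in l, v k ≤ u k) :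
    Tendsto u l (𝓝 L) := by
  refine tendsto_order.2 ⟨fun a ha => ?_, fun a ha => ?_⟩
  · obtain ⟨i, hi, v, hlim, hle⟩ := ((hc.eventually (lt_mem_nhds ha)).and hlower).exists
    filter_upwards [hlim.eventually (lt_mem_nhds hi), hle] with k hk hk' using hk.trans_le hk'
  · filter_upwards [hupper.eventually (gt_mem_nhds ha), hu] with k hk hk' using hk'.trans_lt hk

theorem tendsto_rpow_one_div_sq_of_bounds {Z S : ℕ → ℝ} {a L : ℝ} (hZ : ∀ k, 0 ≤ Z k)
    (hS : ∀ k, 0 ≤ S k) (ha : 0 < a)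
    (hSlim : Tendsto (fun k : ℕ => S k ^ (1 / (k : ℝ) ^ 2)) atTop (𝓝 L))
    (hupper : ∀ k, Z k ≤ S k * a ^ (k + 1))
    (hlower : ∀ ε > 0, ∃ C > 0, ∀ᶠ k in atTop, S k ≤ ((C * (1 + ε) ^ k) ^ 2) ^ (k + 1) * Z k) :
    Tendsto (fun k : ℕ => Z k ^ (1 / (k : ℝ) ^ 2)) atTop (𝓝 L) := by
  refine tendsto_of_tendsto_of_le_of_eventually_lower (F := 𝓝[>] 0)
    (upper := fun k => S k ^ (1 / (k : ℝ) ^ 2) * (a ^ (k + 1)) ^ (1 / (k : ℝ) ^ 2))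
    (c := fun ε => L / (1 + ε) ^ 2) ?_ ?_ ?_ ?_
  · have ha' := tendsto_pow_mul_pow_rpow_one_div_sq ha one_pos
    simp only [one_pow, mul_one] at ha'
    simpa only [mul_one] using hSlim.mul ha'
  · refine Eventually.of_forall fun k => ?_
    rw [← Real.mul_rpow (hS k) (by positivity)]
    exact Real.rpow_le_rpow (hZ k) (hupper k) (by positivity)
  · have : ContinuousAt (fun ε : ℝ => L / (1 + ε) ^ 2) 0 := by fun_prop (disch := norm_num)
    simpa using this.tendsto.mono_left nhdsWithin_le_nhds
  · filter_upwards [self_mem_nhdsWithin] with ε (hε : 0 < ε)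
    obtain ⟨C, hC, hCk⟩ := hlower ε hε
    have hB : ∀ (e : ℝ) (k : ℕ), ((C * e ^ k) ^ 2) ^ (k + 1) =
        (C ^ 2) ^ (k + 1) * (e ^ 2) ^ (k * (k + 1)) := fun e k => by ring
    refine ⟨fun k => S k ^ (1 / (k : ℝ) ^ 2) /
      (((C * (1 + ε) ^ k) ^ 2) ^ (k + 1)) ^ (1 / (k : ℝ) ^ 2), ?_, ?_⟩
    · simp only [hB]
      exact hSlim.div (tendsto_pow_mul_pow_rpow_one_div_sq (by positivity) (by positivity))
        (by positivity)
    · filter_upwards [hCk] with k hk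
      rw [div_le_iff₀' (by positivity), ← Real.mul_rpow (by positivity) (hZ k)]
      exact Real.rpow_le_rpow (hS k) hk (by positivity)

theorem tendsto_ZkQ_rpow_of_measurable {K : Set ℂ} {ν : Measure ℂ} [IsFiniteMeasure ν]
    {Q : ℂ → ℝ} {L : ℝ} (hK : IsCompact K) (hQm : Measurable Q) (hQb : BddBelow (Q '' K))
    (hBM : WeightedBernsteinMarkov K ν Q) (hδ : Tendsto (fun k => deltakQ K Q k) atTop (𝓝 L)) :
    Tendsto (fun k => ZkQ K ν Q k ^ ((1 : ℝ) / ((k : ℝ) ^ 2))) atTop (𝓝 L) := by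
  have hbdd k := bddAbove_weightedVDM_image (k := k) hK hQb
  have hSup_nonneg (k : ℕ) : 0 ≤ sSup (weightedVDM Q k '' {z | ∀ i, z i ∈ K}) :=
    Real.sSup_nonneg (by rintro _ ⟨z, -, rfl⟩; exact weightedVDM_nonneg z)
  have hδ' : Tendsto (fun k : ℕ => deltakQ K Q k ^ (((k : ℝ) + 1) / k)) atTop (𝓝 L) := by
    have hexp : Tendsto (fun k : ℕ => ((k : ℝ) + 1) / k) atTop (𝓝 1) := by
      simpa using (tendsto_natCast_div_add_atTop (1 : ℝ)).inv₀ one_ne_zero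
    simpa using hδ.rpow hexp (Or.inr one_pos)
  refine tendsto_rpow_one_div_sq_of_bounds (a := ν.real K + 1)
    (S := fun k => sSup (weightedVDM Q k '' {z | ∀ i, z i ∈ K}) ^ 2) (fun k => ZkQ_nonneg)
    (fun k => sq_nonneg _) (by positivity) ?_ (fun k => ?_) fun ε hε => ?_
  · refine hδ'.congr' ((eventually_ne_atTop 0).mono fun k hk => ?_)
    exact rpow_two_div_mul_add_one_rpow (hSup_nonneg k) (by positivity)
  · refine (ZkQ_le hK.measurableSet (hbdd k)).trans ?_
    gcongr
    linarith
  · obtain ⟨C, hC, hCBM⟩ := hBM ε hε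
    exact ⟨C, hC, eventually_atTop.2 ⟨1, fun k hk =>
      sq_sSup_weightedVDM_le_ZkQ hK.measurableSet hQm (hbdd k) (hCBM k hk)⟩⟩

theorem ZkQ_tendsto_weighted_transfinite_diameter (K : Set ℂ) (hK : IsCompact K)
    (Q : ℂ → ℝ) (hQ : LowerSemicontinuousOn Q K)
    (ν : Measure ℂ) [IsFiniteMeasure ν]
    (hBM : WeightedBernsteinMarkov K ν Q)
    (L : ℝ)
    (hδ : Tendsto (fun k => deltakQ K Q k) atTop (nhds L)) :
    Tendsto (fun k => ZkQ K ν Q k ^ ((1 : ℝ) / ((k : ℝ) ^ 2))) atTop (nhds L) := by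
  obtain ⟨Q', hQ'm, hQQ'⟩ := hQ.exists_measurable_eqOn hK.measurableSet
  simp only [ZkQ_congr hK.measurableSet hQQ', deltakQ_congr hQQ'] at hδ ⊢
  refine tendsto_ZkQ_rpow_of_measurable hK hQ'm ?_ (hBM.congr hK.measurableSet hQQ') hδ
  rw [← hQQ'.image_eq]
  exact hQ.bddBelow_of_isCompact hK
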